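/- (AEP for the free projective robustness.) Let (F_n) be a free-state family satisfying Axioms I–IV such that R_{s,F_n}(τ) < ∞ for every state τ. Define D_{Ω,s,F}(ω) := min_{σ∈F}[ D_s(ω‖σ) + D_max(σ‖ω) ], where D_s(ω‖σ) := inf{ log₂ λ : λ > 0, λσ − ω ∈ cone(F) }. Then the smoothed regularizations coincide: lim_{ε→0} limsup_{n→∞} min{ (1/n) D_{Ω,s,F_n}(ω') : (1/2)‖ω' − ω^{⊗n}‖₁ ≤ ε } = lim_{ε→0} limsup_{n→∞} min{ (1/n) log₂(1 + R_{s,F_n}(ω')) : (1/2)‖ω' − ω^{⊗n}‖₁ ≤ ε }. -/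

import Mathlib

open scoped BigOperators ComplexOrder
open Filter Topology

noncomputable section

namespace QRT

open scoped Classical

variable {ι κ : Type*} [Fintype ι] [DecidableEq ι] [Fintype κ] [DecidableEq κ]

/-- A density matrix (quantum state): positive semidefinite with unit trace. -/
def IsState (ρ : Matrix ι ι ℂ) : Prop :=
  ρ.PosSemidef ∧ ρ.trace = 1

/-- Loewner order: `A ≤ B` iff `B - A` is positive semidefinite. -/
def Loewner (A B : Matrix ι ι ℂ) : Prop :=
  (B - A).PosSemidef

/-- Trace norm (sum of singular values): `‖A‖₁ = Tr √(AᴴA)`. -/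
def traceNorm (A : Matrix ι ι ℂ) : ℝ :=
  (((Matrix.isHermitian_conjTranspose_mul_self A).eigenvectorUnitary.1 *
    Matrix.diagonal (fun i => ((√((Matrix.isHermitian_conjTranspose_mul_self A).eigenvalues i) : ℝ) : ℂ)) *
    (star (Matrix.isHermitian_conjTranspose_mul_self A).eigenvectorUnitary : Matrix ι ι ℂ)).trace).re

/-- The max-relative entropy `D_max(ρ‖σ)` (base 2); `+∞` if infeasible. -/
def Dmax (ρ σ : Matrix ι ι ℂ) : EReal :=
  sInf {x : EReal | ∃ l : ℝ, 0 < l ∧ Loewner ρ (l • σ) ∧ x = ((Real.logb 2 l : ℝ) : EReal)}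

/-- The projective relative entropy (Hilbert projective metric). -/
def DOmega (ρ σ : Matrix ι ι ℂ) : EReal :=
  Dmax ρ σ + Dmax σ ρ

/-- Support inclusion `supp ρ ⊆ supp σ` for positive semidefinite matrices,
expressed as kernel inclusion `ker σ ⊆ ker ρ`. -/
def SuppLe (ρ σ : Matrix ι ι ℂ) : Prop :=
  ∀ v : ι → ℂ, σ.mulVec v = 0 → ρ.mulVec v = 0

/-- Application of a real function to a Hermitian matrix via the spectral decomposition. -/
def mfun (f : ℝ → ℝ) (A : Matrix ι ι ℂ) : Matrix ι ι ℂ :=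
  if hA : A.IsHermitian then
    (hA.eigenvectorUnitary : Matrix ι ι ℂ) *
      Matrix.diagonal (fun i => (f (hA.eigenvalues i) : ℂ)) *
      (hA.eigenvectorUnitary : Matrix ι ι ℂ).conjTranspose
  else 0

/-- Base-2 matrix logarithm on the support of a positive semidefinite matrix. -/
def mlog2 (A : Matrix ι ι ℂ) : Matrix ι ι ℂ :=
  mfun (fun x => if x ≤ 0 then 0 else Real.logb 2 x) A

/-- Umegaki quantum relative entropy (base 2):
`D(ρ‖σ) = Tr[ρ (log₂ ρ - log₂ σ)]` if `supp ρ ⊆ supp σ`, and `+∞` otherwise. -/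
def Drel (ρ σ : Matrix ι ι ℂ) : EReal :=
  if SuppLe ρ σ then (((ρ * (mlog2 ρ - mlog2 σ)).trace.re : ℝ) : EReal) else ⊤

/-- Relative entropy of a resource: `D_F(ρ) = min_{σ ∈ F} D(ρ‖σ)`. -/
def DF (F : Set (Matrix ι ι ℂ)) (ρ : Matrix ι ι ℂ) : EReal :=
  sInf {x : EReal | ∃ σ ∈ F, x = Drel ρ σ}

/-- Max-relative entropy of a resource. -/
def DmaxF (F : Set (Matrix ι ι ℂ)) (ρ : Matrix ι ι ℂ) : EReal :=
  sInf {x : EReal | ∃ σ ∈ F, x = Dmax ρ σ}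

/-- Projective relative entropy of a resource: `D_{Ω,F}(ρ) = min_{σ ∈ F} D_Ω(ρ‖σ)`. -/
def DOmegaF (F : Set (Matrix ι ι ℂ)) (ρ : Matrix ι ι ℂ) : EReal :=
  sInf {x : EReal | ∃ σ ∈ F, x = DOmega ρ σ}

/-- Min-relative entropy of a resource for a pure state `ψ`:
`D_{min,F}(ψ) = min_{σ∈F} (-log₂⟨ψ|σ|ψ⟩)` where `⟨ψ|σ|ψ⟩ = Tr(ψσ)`. -/
def DminF (F : Set (Matrix ι ι ℂ)) (ψ : Matrix ι ι ℂ) : EReal :=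
  sInf {x : EReal | ∃ σ ∈ F, 0 < ((ψ * σ).trace).re ∧
    x = ((-(Real.logb 2 (((ψ * σ).trace).re)) : ℝ) : EReal)}

/-- The convex cone generated by a set of states. -/
def cone (F : Set (Matrix ι ι ℂ)) : Set (Matrix ι ι ℂ) :=
  {A | ∃ t : ℝ, 0 ≤ t ∧ ∃ σ ∈ F, A = t • σ}

/-- `D_s(ω‖σ) := inf { log₂ λ : λ > 0, λσ - ω ∈ cone(F) }`. -/
def Ds (F : Set (Matrix ι ι ℂ)) (ω σ : Matrix ι ι ℂ) : EReal :=
  sInf {x : EReal | ∃ l : ℝ, 0 < l ∧ (l • σ - ω) ∈ cone F ∧ x = ((Real.logb 2 l : ℝ) : EReal)}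

/-- The free variant of the projective relative entropy:
`D_{Ω,s,F}(ω) := min_{σ∈F} [ D_s(ω‖σ) + D_max(σ‖ω) ]`. -/
def DOmegasF (F : Set (Matrix ι ι ℂ)) (ω : Matrix ι ι ℂ) : EReal :=
  sInf {x : EReal | ∃ σ ∈ F, x = Ds F ω σ + Dmax σ ω}

/-- The standard robustness `R_{s,F}(ρ) := inf{ λ ≥ 0 : ∃ σ ∈ F, (ρ+λσ)/(1+λ) ∈ F }`,
as an extended real (`+∞` if infeasible). -/
def Rs (F : Set (Matrix ι ι ℂ)) (ρ : Matrix ι ι ℂ) : EReal :=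
  sInf {x : EReal | ∃ l : ℝ, 0 ≤ l ∧ (∃ σ ∈ F, ((1 + l)⁻¹ • (ρ + l • σ)) ∈ F) ∧
    x = ((l : ℝ) : EReal)}

/-- `log₂(1 + R_{s,F}(ρ))`, the logarithmic standard robustness. -/
def logRs (F : Set (Matrix ι ι ℂ)) (ρ : Matrix ι ι ℂ) : EReal :=
  sInf {x : EReal | ∃ l : ℝ, 0 ≤ l ∧ (∃ σ ∈ F, ((1 + l)⁻¹ • (ρ + l • σ)) ∈ F) ∧
    x = ((Real.logb 2 (1 + l) : ℝ) : EReal)}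

/-- The Choi matrix of a linear map on matrices. -/
def choi (Λ : Matrix ι ι ℂ →ₗ[ℂ] Matrix κ κ ℂ) : Matrix (ι × κ) (ι × κ) ℂ :=
  Matrix.of fun p q => Λ (Matrix.single p.1 q.1 1) p.2 q.2

/-- Complete positivity, via Choi's theorem. -/
def IsCP (Λ : Matrix ι ι ℂ →ₗ[ℂ] Matrix κ κ ℂ) : Prop :=
  (choi Λ).PosSemidef

/-- Trace non-increasing on positive semidefinite inputs. -/
def TraceNonincreasing (Λ : Matrix ι ι ℂ →ₗ[ℂ] Matrix κ κ ℂ) : Prop :=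
  ∀ A : Matrix ι ι ℂ, A.PosSemidef → ((Λ A).trace).re ≤ (A.trace).re

/-- Normalization `A ↦ A / Tr A`. -/
def normalize (A : Matrix ι ι ℂ) : Matrix ι ι ℂ :=
  (A.trace)⁻¹ • A

/-- A free probabilistic operation: a completely positive trace–non-increasing map
that sends free states of `F` to free states of `F'` after renormalization. -/
def IsFreeOp (F : Set (Matrix ι ι ℂ)) (F' : Set (Matrix κ κ ℂ))
    (Λ : Matrix ι ι ℂ →ₗ[ℂ] Matrix κ κ ℂ) : Prop :=
  IsCP Λ ∧ TraceNonincreasing Λ ∧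
    ∀ σ ∈ F, 0 < ((Λ σ).trace).re → normalize (Λ σ) ∈ F'

/-- `n`-fold tensor (Kronecker) power of a matrix, indexed by `Fin n → ι`. -/
def tpow (ρ : Matrix ι ι ℂ) (n : ℕ) : Matrix (Fin n → ι) (Fin n → ι) ℂ :=
  Matrix.of fun i j => ∏ k, ρ (i k) (j k)

/-- Tensor product of tensor-power-indexed matrices. -/
def tmul {n m : ℕ} (A : Matrix (Fin n → ι) (Fin n → ι) ℂ)
    (B : Matrix (Fin m → ι) (Fin m → ι) ℂ) :
    Matrix (Fin (n + m) → ι) (Fin (n + m) → ι) ℂ :=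
  Matrix.of fun i j =>
    A (fun k => i (Fin.castAdd m k)) (fun k => j (Fin.castAdd m k)) *
      B (fun k => i (Fin.natAdd n k)) (fun k => j (Fin.natAdd n k))

/-- Partial trace over the tensor factor in position `k`. -/
def ptrace {n : ℕ} (σ : Matrix (Fin (n + 1) → ι) (Fin (n + 1) → ι) ℂ) (k : Fin (n + 1)) :
    Matrix (Fin n → ι) (Fin n → ι) ℂ :=
  Matrix.of fun i j => ∑ x : ι, σ (k.insertNth x i) (k.insertNth x j)

/-- Axioms I–IV for a family of free-state sets on tensor powers of `ℂ^d`: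
convex closed sets of states, containing the powers of a full-rank free state,
closed under partial traces and under tensor products. -/
structure IsFreeFamily (d : ℕ)
    (F : ∀ n : ℕ, Set (Matrix (Fin n → Fin d) (Fin n → Fin d) ℂ)) : Prop where
  states : ∀ n, ∀ σ ∈ F n, IsState σ
  convex : ∀ n, Convex ℝ (F n)
  closed : ∀ n, IsClosed (F n)
  fullRank : ∃ σ : Matrix (Fin d) (Fin d) ℂ, IsState σ ∧ σ.PosDef ∧ ∀ n, tpow σ n ∈ F n
  ptrace_mem : ∀ n, ∀ σ ∈ F (n + 1), ∀ k : Fin (n + 1), ptrace σ k ∈ F n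
  tmul_mem : ∀ n m, ∀ σ ∈ F n, ∀ σ' ∈ F m, tmul σ σ' ∈ F (n + m)

variable {I K : ℕ → Type*} [∀ n, Fintype (I n)] [∀ n, DecidableEq (I n)]
  [∀ n, Fintype (K n)] [∀ n, DecidableEq (K n)]

/-- The smallest trace-distance error achievable when transforming `ρseq n` into
`ωseq ⌊rn⌋` by free probabilistic operations. -/
def convErr (F : ∀ n, Set (Matrix (I n) (I n) ℂ)) (F' : ∀ n, Set (Matrix (K n) (K n) ℂ))
    (ρseq : ∀ n, Matrix (I n) (I n) ℂ) (ωseq : ∀ n, Matrix (K n) (K n) ℂ)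
    (r : ℝ) (n : ℕ) : ℝ :=
  sInf {e : ℝ |
    ∃ Λ : Matrix (I n) (I n) ℂ →ₗ[ℂ] Matrix (K ⌊r * n⌋₊) (K ⌊r * n⌋₊) ℂ,
      IsFreeOp (F n) (F' ⌊r * n⌋₊) Λ ∧
      e = (1 / 2) * traceNorm (normalize (Λ (ρseq n)) - ωseq ⌊r * n⌋₊)}

/-- The probabilistic transformation rate `r_prob`, as an extended real. -/
def rprob (F : ∀ n, Set (Matrix (I n) (I n) ℂ)) (F' : ∀ n, Set (Matrix (K n) (K n) ℂ))
    (ρseq : ∀ n, Matrix (I n) (I n) ℂ) (ωseq : ∀ n, Matrix (K n) (K n) ℂ) : EReal :=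
  sSup {x : EReal | ∃ r : ℝ, 0 ≤ r ∧ x = (r : EReal) ∧
    Tendsto (fun n => convErr F F' ρseq ωseq r n) atTop (nhds 0)}

/-- The strong converse probabilistic transformation rate `r†_prob`. -/
def rprobSC (F : ∀ n, Set (Matrix (I n) (I n) ℂ)) (F' : ∀ n, Set (Matrix (K n) (K n) ℂ))
    (ρseq : ∀ n, Matrix (I n) (I n) ℂ) (ωseq : ∀ n, Matrix (K n) (K n) ℂ) : EReal :=
  sSup {x : EReal | ∃ r : ℝ, 0 ≤ r ∧ x = (r : EReal) ∧
    liminf (fun n => convErr F F' ρseq ωseq r n) atTop < 1}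

/-- A pure state `ψ = |v⟩⟨v|` with `‖v‖ = 1`. -/
def IsPure (ψ : Matrix ι ι ℂ) : Prop :=
  IsState ψ ∧ ∃ v : ι → ℂ, ψ = Matrix.of fun i j => v i * (starRingEnd ℂ) (v j)

/-- Tensor product across the A/B bipartition of `n`-copy bipartite operators. -/
def abProd {dA dB n : ℕ} (A : Matrix (Fin n → Fin dA) (Fin n → Fin dA) ℂ)
    (B : Matrix (Fin n → Fin dB) (Fin n → Fin dB) ℂ) :
    Matrix (Fin n → Fin dA × Fin dB) (Fin n → Fin dA × Fin dB) ℂ :=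
  Matrix.of fun i j =>
    A (fun k => (i k).1) (fun k => (j k).1) * B (fun k => (i k).2) (fun k => (j k).2)

/-- Separable states on `n` copies of a bipartite system `ℂ^{dA} ⊗ ℂ^{dB}`, with respect to
the bipartition grouping all `A` factors against all `B` factors. -/
def SEP (dA dB n : ℕ) :
    Set (Matrix (Fin n → Fin dA × Fin dB) (Fin n → Fin dA × Fin dB) ℂ) :=
  closure (convexHull ℝ {ρ | ∃ A B, IsState A ∧ IsState B ∧ ρ = abProd A B})

/-- Separable states on a single copy of `ℂ^{dA} ⊗ ℂ^{dB}`. -/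
def SEP1 (dA dB : ℕ) : Set (Matrix (Fin dA × Fin dB) (Fin dA × Fin dB) ℂ) :=
  closure (convexHull ℝ
    {ρ | ∃ (A : Matrix (Fin dA) (Fin dA) ℂ) (B : Matrix (Fin dB) (Fin dB) ℂ),
      IsState A ∧ IsState B ∧ ρ = Matrix.of fun p q => A p.1 q.1 * B p.2 q.2})

/-- Partial transpose on the second subsystem (single copy). -/
def ptrans1 {dA dB : ℕ} (M : Matrix (Fin dA × Fin dB) (Fin dA × Fin dB) ℂ) :
    Matrix (Fin dA × Fin dB) (Fin dA × Fin dB) ℂ :=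
  Matrix.of fun p q => M (p.1, q.2) (q.1, p.2)

/-- PPT states on a single copy. -/
def PPT1 (dA dB : ℕ) : Set (Matrix (Fin dA × Fin dB) (Fin dA × Fin dB) ℂ) :=
  {σ | IsState σ ∧ (ptrans1 σ).PosSemidef}

/-- Partial transpose over all `B` factors of an `n`-copy bipartite system. -/
def ptransN {dA dB n : ℕ}
    (M : Matrix (Fin n → Fin dA × Fin dB) (Fin n → Fin dA × Fin dB) ℂ) :
    Matrix (Fin n → Fin dA × Fin dB) (Fin n → Fin dA × Fin dB) ℂ :=
  Matrix.of fun i j => M (fun k => ((i k).1, (j k).2)) (fun k => ((j k).1, (i k).2))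

/-- PPT states on `n` copies, w.r.t. the bipartition grouping all `A` factors
against all `B` factors. -/
def PPTn (dA dB n : ℕ) :
    Set (Matrix (Fin n → Fin dA × Fin dB) (Fin n → Fin dA × Fin dB) ℂ) :=
  {σ | IsState σ ∧ (ptransN σ).PosSemidef}

/-- The maximally entangled state `Φ_d` on `ℂ^d ⊗ ℂ^d`. -/
def PhiMax (d : ℕ) : Matrix (Fin d × Fin d) (Fin d × Fin d) ℂ :=
  Matrix.of fun p q => if p.1 = p.2 ∧ q.1 = q.2 then ((d : ℂ))⁻¹ else 0

/-- The isotropic state `ρ_p = p Φ_d + (1-p)(I - Φ_d)/(d²-1)`. -/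
def iso (d : ℕ) (p : ℝ) : Matrix (Fin d × Fin d) (Fin d × Fin d) ℂ :=
  p • PhiMax d + ((1 - p) / ((d : ℝ) ^ 2 - 1)) • (1 - PhiMax d)

end QRT

/-! The two smoothed quantities control each other. Pointwise, `log₂(1 + R_s(ω)) ≤ D_s(ω‖σ)` for
every free `σ` and `D_max(σ‖ω) ≥ 0` between states, so `log₂(1 + R_s) ≤ D_{Ω,s,F}`. Conversely,
if `σ'' = (ω + λσ)/(1 + λ)` is free for some free `σ`, the state `ω'' = (1 - δ)ω + δσ''` is within
`δ` of `ω` in trace distance, and `σ''` itself witnesses `D_s(ω''‖σ'') ≤ log₂(1 + λ)` and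
`D_max(σ''‖ω'') ≤ log₂(1/δ)`. Hence the `(ε + δ)`-smoothed `D_{Ω,s,F}` of `ω^{⊗n}` is at most the
`ε`-smoothed `log₂(1 + R_s)` plus `log₂(1/δ)`, which disappears after dividing by `n`; taking
`δ = ε → 0` squeezes both limits together. -/

open scoped MatrixOrder

namespace QRT

variable {ι : Type*}

section TraceNorm

variable [Fintype ι] [DecidableEq ι]

lemma traceNorm_eq_re_trace_abs (A : Matrix ι ι ℂ) : traceNorm A = (CFC.abs A).trace.re := by
  have hAA := Matrix.isHermitian_conjTranspose_mul_self A
  change (hAA.cfc Real.sqrt).trace.re = _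
  rw [← hAA.cfc_eq, ← cfcₙ_eq_cfc,
    ← CFC.sqrt_eq_real_sqrt _ (Matrix.posSemidef_conjTranspose_mul_self A).nonneg]
  rfl

lemma _root_.Matrix.IsHermitian.re_trace_abs {A : Matrix ι ι ℂ} (hA : A.IsHermitian) :
    (CFC.abs A).trace.re = ∑ i, |hA.eigenvalues i| := by
  rw [CFC.abs_eq_cfc_norm A hA.isSelfAdjoint, hA.cfc_eq, Matrix.IsHermitian.cfc,
    Unitary.conjStarAlgAut_apply, Matrix.trace_mul_cycle, Unitary.coe_star_mul_self, one_mul,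
    Matrix.trace_diagonal]
  simp

lemma traceNorm_sub_le {P Q : Matrix ι ι ℂ} (hP : P.PosSemidef) (hQ : Q.PosSemidef) :
    traceNorm (P - Q) ≤ P.trace.re + Q.trace.re := by
  have hX := hP.1.sub hQ.1
  let U : Matrix ι ι ℂ := hX.eigenvectorUnitary
  have hUU : U * star U = 1 := Unitary.coe_mul_star_self _
  -- in the eigenbasis of `P - Q`, each eigenvalue is a difference of nonnegative diagonal entries
  let C : Matrix ι ι ℂ → Matrix ι ι ℂ := fun M => star U * M * U
  have hdiag : C P - C Q = Matrix.diagonal (fun i => (hX.eigenvalues i : ℂ)) := by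
    have h := hX.conjStarAlgAut_star_eigenvectorUnitary
    rwa [Unitary.conjStarAlgAut_star_apply, Matrix.mul_sub, Matrix.sub_mul] at h
  have hdiag_nonneg : ∀ {M : Matrix ι ι ℂ}, M.PosSemidef → ∀ i, 0 ≤ (C M i i).re := fun hM i =>
    (Complex.nonneg_iff.1 ((hM.conjTranspose_mul_mul_same U).diag_nonneg (i := i))).1
  have htrace : ∀ M, (C M).trace.re = ∑ i, (C M i i).re := fun M => Complex.re_sum _ _
  have hC_trace : ∀ M, (C M).trace = M.trace := fun M => by
    simp only [C]
    rw [Matrix.trace_mul_cycle, hUU, one_mul]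
  rw [traceNorm_eq_re_trace_abs, hX.re_trace_abs, ← hC_trace P, ← hC_trace Q, htrace, htrace,
    ← Finset.sum_add_distrib]
  refine Finset.sum_le_sum fun i _ => ?_
  have hEig : hX.eigenvalues i = (C P i i).re - (C Q i i).re := by
    simpa using congrArg (fun M => (M i i).re) hdiag.symm
  have hPi := hdiag_nonneg hP i
  have hQi := hdiag_nonneg hQ i
  rw [hEig, abs_le]
  constructor <;> linarith

lemma _root_.Matrix.IsHermitian.exists_posSemidef_sub_eq {X : Matrix ι ι ℂ} (hX : X.IsHermitian) :
    ∃ P Q : Matrix ι ι ℂ, P.PosSemidef ∧ Q.PosSemidef ∧ X = P - Q ∧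
      P.trace.re + Q.trace.re = traceNorm X :=
  ⟨X⁺, X⁻, Matrix.nonneg_iff_posSemidef.mp (CFC.posPart_nonneg X),
    Matrix.nonneg_iff_posSemidef.mp (CFC.negPart_nonneg X),
    (CFC.posPart_sub_negPart X hX.isSelfAdjoint).symm, by
      rw [traceNorm_eq_re_trace_abs, ← CFC.posPart_add_negPart X hX.isSelfAdjoint,
        Matrix.trace_add, Complex.add_re]⟩

lemma half_traceNorm_mix_sub_le {ω σ τ : Matrix ι ι ℂ} (hω : IsState ω) (hσ : IsState σ)
    (hτ : IsState τ) {ε δ : ℝ} (hδ0 : 0 ≤ δ) (hδ1 : δ ≤ 1) (hε : 1 / 2 * traceNorm (ω - τ) ≤ ε) :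
    1 / 2 * traceNorm ((1 - δ) • ω + δ • σ - τ) ≤ ε + δ := by
  obtain ⟨P, Q, hP, hQ, hPQ, hPQ_trace⟩ := (hω.1.1.sub hτ.1.1).exists_posSemidef_sub_eq
  have hmix : (1 - δ) • ω + δ • σ - τ = ((1 - δ) • P + δ • σ) - ((1 - δ) • Q + δ • τ) := by
    rw [show ω = τ + (P - Q) by rw [← hPQ]; abel]
    module
  have hle := traceNorm_sub_le ((hP.smul (sub_nonneg.2 hδ1)).add (hσ.1.smul hδ0))
    ((hQ.smul (sub_nonneg.2 hδ1)).add (hτ.1.smul hδ0))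
  have hP0 := (Complex.nonneg_iff.1 hP.trace_nonneg).1
  have hQ0 := (Complex.nonneg_iff.1 hQ.trace_nonneg).1
  simp only [Matrix.trace_add, Matrix.trace_smul, hσ.2, hτ.2, Complex.add_re, Complex.smul_re,
    Complex.one_re, smul_eq_mul] at hle
  rw [hmix]
  nlinarith [mul_nonneg hδ0 (add_nonneg hP0 hQ0)]

end TraceNorm

lemma tpow_conjTranspose (A : Matrix ι ι ℂ) (n : ℕ) :
    tpow A.conjTranspose n = (tpow A n).conjTranspose := by
  ext i j
  simp [tpow, star_prod]

section States

variable [Fintype ι]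

lemma convex_setOf_isState : Convex ℝ {ρ : Matrix ι ι ℂ | IsState ρ} := by
  rintro ρ ⟨hρ, hρ1⟩ σ ⟨hσ, hσ1⟩ a b ha hb hab
  refine ⟨(hρ.smul ha).add (hσ.smul hb), ?_⟩
  rw [Matrix.trace_add, Matrix.trace_smul, Matrix.trace_smul, hρ1, hσ1, ← add_smul, hab, one_smul]

lemma tpow_mul (A B : Matrix ι ι ℂ) (n : ℕ) : tpow (A * B) n = tpow A n * tpow B n := by
  ext i j
  simp only [tpow, Matrix.of_apply, Matrix.mul_apply, Finset.prod_univ_sum, Fintype.piFinset_univ,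
    Finset.prod_mul_distrib]

lemma trace_tpow (A : Matrix ι ι ℂ) (n : ℕ) : (tpow A n).trace = A.trace ^ n := by
  simp only [Matrix.trace, Matrix.diag, tpow, Matrix.of_apply]
  rw [← Fin.prod_const, Finset.prod_univ_sum, Fintype.piFinset_univ]

lemma IsState.tpow {ρ : Matrix ι ι ℂ} (hρ : IsState ρ) (n : ℕ) : IsState (tpow ρ n) := by
  classical
  obtain ⟨B, rfl⟩ := CStarAlgebra.nonneg_iff_eq_star_mul_self.mp hρ.1.nonneg
  refine ⟨?_, by rw [trace_tpow, hρ.2, one_pow]⟩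
  rw [Matrix.star_eq_conjTranspose, tpow_mul, tpow_conjTranspose]
  exact Matrix.posSemidef_conjTranspose_mul_self _

lemma Dmax_nonneg {ρ σ : Matrix ι ι ℂ} (hρ : IsState ρ) (hσ : IsState σ) : 0 ≤ Dmax ρ σ := by
  refine le_sInf ?_
  rintro _ ⟨l, hl, hρσ, rfl⟩
  have h := (Complex.nonneg_iff.1 hρσ.trace_nonneg).1
  simp only [Matrix.trace_sub, Matrix.trace_smul, hρ.2, hσ.2, Complex.sub_re, Complex.smul_re,
    Complex.one_re, smul_eq_mul, mul_one] at h
  exact_mod_cast Real.logb_nonneg one_lt_two (by linarith)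

lemma logRs_le_Ds {F : Set (Matrix ι ι ℂ)} (hF : ∀ σ ∈ F, IsState σ) {ρ σ : Matrix ι ι ℂ}
    (hρ : IsState ρ) (hσ : σ ∈ F) : logRs F ρ ≤ Ds F ρ σ := by
  refine le_sInf ?_
  rintro _ ⟨l, hl, ⟨t, ht, σ', hσ', hlt⟩, rfl⟩
  have htl : t = l - 1 := by
    have h := congrArg (fun M => M.trace.re) hlt
    simp only [Matrix.trace_sub, Matrix.trace_smul, hρ.2, (hF σ hσ).2, (hF σ' hσ').2,
      Complex.sub_re, Complex.smul_re, Complex.one_re, smul_eq_mul, mul_one] at h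
    linarith
  subst htl
  have hmem : (1 + (l - 1))⁻¹ • (ρ + (l - 1) • σ') ∈ F := by
    rwa [show ρ + (l - 1) • σ' = l • σ by rw [← hlt]; abel, add_sub_cancel, smul_smul,
      inv_mul_cancel₀ hl.ne', one_smul]
  have h : logRs F ρ ≤ ((Real.logb 2 (1 + (l - 1)) : ℝ) : EReal) :=
    sInf_le ⟨l - 1, ht, ⟨σ', hσ', hmem⟩, rfl⟩
  rwa [add_sub_cancel] at h

lemma logRs_le_DOmegasF {F : Set (Matrix ι ι ℂ)} (hF : ∀ σ ∈ F, IsState σ) {ρ : Matrix ι ι ℂ}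
    (hρ : IsState ρ) : logRs F ρ ≤ DOmegasF F ρ := by
  refine le_sInf ?_
  rintro _ ⟨σ, hσ, rfl⟩
  calc logRs F ρ ≤ Ds F ρ σ := logRs_le_Ds hF hρ hσ
    _ ≤ Ds F ρ σ + Dmax σ ρ := le_add_of_nonneg_right (Dmax_nonneg (hF σ hσ) hρ)

end States

lemma smul_mem_cone {F : Set (Matrix ι ι ℂ)} {A : Matrix ι ι ℂ} (hA : A ∈ cone F) {c : ℝ}
    (hc : 0 ≤ c) : c • A ∈ cone F := by
  obtain ⟨t, ht, σ, hσ, rfl⟩ := hA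
  exact ⟨c * t, mul_nonneg hc ht, σ, hσ, smul_smul c t σ⟩

section Mixing

variable {F : Set (Matrix ι ι ℂ)} {ω σ : Matrix ι ι ℂ} {δ : ℝ}

lemma Ds_mix_le {l : ℝ} (hl : 1 ≤ l) (hcone : l • σ - ω ∈ cone F) (hδ0 : 0 ≤ δ) (hδ1 : δ ≤ 1) :
    Ds F ((1 - δ) • ω + δ • σ) σ ≤ ((Real.logb 2 l : ℝ) : EReal) := by
  have hpos : 0 < (1 - δ) * l + δ := by nlinarith
  have hmem : ((1 - δ) * l + δ) • σ - ((1 - δ) • ω + δ • σ) ∈ cone F := by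
    rw [show ((1 - δ) * l + δ) • σ - ((1 - δ) • ω + δ • σ) = (1 - δ) • (l • σ - ω) by module]
    exact smul_mem_cone hcone (sub_nonneg.2 hδ1)
  calc Ds F ((1 - δ) • ω + δ • σ) σ ≤ ((Real.logb 2 ((1 - δ) * l + δ) : ℝ) : EReal) :=
        sInf_le ⟨_, hpos, hmem, rfl⟩
    _ ≤ ((Real.logb 2 l : ℝ) : EReal) := by
        exact_mod_cast Real.logb_le_logb_of_le one_lt_two hpos (by nlinarith)

lemma Dmax_mix_le (hω : ω.PosSemidef) (hδ0 : 0 < δ) (hδ1 : δ ≤ 1) :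
    Dmax σ ((1 - δ) • ω + δ • σ) ≤ ((Real.logb 2 δ⁻¹ : ℝ) : EReal) := by
  refine sInf_le ⟨δ⁻¹, inv_pos.2 hδ0, ?_, rfl⟩
  rw [Loewner, smul_add, smul_smul, smul_smul, inv_mul_cancel₀ hδ0.ne', one_smul,
    add_sub_cancel_right]
  exact hω.smul (mul_nonneg (inv_nonneg.2 hδ0.le) (sub_nonneg.2 hδ1))

lemma DOmegasF_mix_le (hω : ω.PosSemidef) (hσ : σ ∈ F) {l : ℝ} (hl : 1 ≤ l)
    (hcone : l • σ - ω ∈ cone F) (hδ0 : 0 < δ) (hδ1 : δ ≤ 1) :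
    DOmegasF F ((1 - δ) • ω + δ • σ) ≤ ((Real.logb 2 l + Real.logb 2 δ⁻¹ : ℝ) : EReal) := by
  calc DOmegasF F ((1 - δ) • ω + δ • σ)
      ≤ Ds F ((1 - δ) • ω + δ • σ) σ + Dmax σ ((1 - δ) • ω + δ • σ) := sInf_le ⟨σ, hσ, rfl⟩
    _ ≤ ((Real.logb 2 l + Real.logb 2 δ⁻¹ : ℝ) : EReal) := by
        rw [EReal.coe_add]
        exact add_le_add (Ds_mix_le hl hcone hδ0.le hδ1) (Dmax_mix_le hω hδ0 hδ1)

end Mixing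

lemma _root_.EReal.le_coe_mul_sInf {c : ℝ} (hc : 0 < c) {x : EReal} {s : Set EReal}
    (h : ∀ y ∈ s, x ≤ c * y) : x ≤ c * sInf s := by
  have hc0 : (0 : EReal) < c := by exact_mod_cast hc
  rw [← EReal.div_le_iff_le_mul hc0 (EReal.coe_ne_top c)]
  exact le_sInf fun y hy => (EReal.div_le_iff_le_mul hc0 (EReal.coe_ne_top c)).2 (h y hy)

lemma _root_.EReal.le_sInf_add_coe {b : ℝ} {x : EReal} {s : Set EReal} (h : ∀ y ∈ s, x ≤ y + b) :
    x ≤ sInf s + b := by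
  have hsub : ∀ {z : EReal}, x - b ≤ z ↔ x ≤ z + b := fun {z} =>
    EReal.sub_le_iff_le_add (.inl (EReal.coe_ne_bot b)) (.inl (EReal.coe_ne_top b))
  exact hsub.1 (le_sInf fun y hy => hsub.2 (h y hy))

section Smoothing

variable [Fintype ι] [DecidableEq ι]

def smoothInf (G : Matrix ι ι ℂ → EReal) (τ : Matrix ι ι ℂ) (ε : ℝ) : EReal :=
  sInf {x | ∃ ω : Matrix ι ι ℂ, IsState ω ∧ 1 / 2 * traceNorm (ω - τ) ≤ ε ∧ x = G ω}

lemma smoothInf_antitone (G : Matrix ι ι ℂ → EReal) (τ : Matrix ι ι ℂ) :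
    Antitone (smoothInf G τ) := fun _ _ hε =>
  sInf_le_sInf fun _ ⟨ω, hω, hball, hx⟩ => ⟨ω, hω, hball.trans hε, hx⟩

lemma smoothInf_mono {G H : Matrix ι ι ℂ → EReal} (h : ∀ ω, IsState ω → G ω ≤ H ω)
    (τ : Matrix ι ι ℂ) (ε : ℝ) : smoothInf G τ ε ≤ smoothInf H τ ε := by
  refine le_sInf ?_
  rintro _ ⟨ω, hω, hball, rfl⟩
  exact (sInf_le ⟨ω, hω, hball, rfl⟩ : smoothInf G τ ε ≤ G ω).trans (h ω hω)

lemma smoothInf_coe_mul {c : ℝ} (hc : 0 < c) (G : Matrix ι ι ℂ → EReal) (τ : Matrix ι ι ℂ)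
    (ε : ℝ) : smoothInf (fun ω => c * G ω) τ ε = c * smoothInf G τ ε :=
  le_antisymm
    (EReal.le_coe_mul_sInf hc fun _ ⟨ω, hω, hball, hx⟩ => hx ▸ sInf_le ⟨ω, hω, hball, rfl⟩)
    (le_sInf fun _ ⟨ω, hω, hball, hx⟩ => hx ▸
      mul_le_mul_of_nonneg_left (sInf_le ⟨ω, hω, hball, rfl⟩) (by exact_mod_cast hc.le))

lemma smoothInf_DOmegasF_le {F : Set (Matrix ι ι ℂ)} (hF : ∀ σ ∈ F, IsState σ)
    {τ : Matrix ι ι ℂ} (hτ : IsState τ) {ε δ : ℝ} (hδ0 : 0 < δ) (hδ1 : δ ≤ 1) :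
    smoothInf (DOmegasF F) τ (ε + δ) ≤ smoothInf (logRs F) τ ε + (Real.logb 2 δ⁻¹ : ℝ) := by
  refine EReal.le_sInf_add_coe ?_
  rintro _ ⟨ω, hω, hball, rfl⟩
  refine EReal.le_sInf_add_coe ?_
  rintro _ ⟨l, hl, ⟨σ, hσ, hmix⟩, rfl⟩
  set σ' := (1 + l)⁻¹ • (ω + l • σ)
  have hσ'_cone : (1 + l) • σ' - ω ∈ cone F :=
    ⟨l, hl, σ, hσ, by rw [smul_smul, mul_inv_cancel₀ (by linarith), one_smul, add_sub_cancel_left]⟩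
  have hmix_state : IsState ((1 - δ) • ω + δ • σ') :=
    convex_setOf_isState hω (hF σ' hmix) (by linarith) hδ0.le (by ring)
  calc smoothInf (DOmegasF F) τ (ε + δ) ≤ DOmegasF F ((1 - δ) • ω + δ • σ') :=
        sInf_le ⟨_, hmix_state, half_traceNorm_mix_sub_le hω (hF σ' hmix) hτ hδ0.le hδ1 hball, rfl⟩
    _ ≤ ((Real.logb 2 (1 + l) + Real.logb 2 δ⁻¹ : ℝ) : EReal) :=
        DOmegasF_mix_le hω.1 hmix (by linarith) hσ'_cone hδ0 hδ1
    _ = ((Real.logb 2 (1 + l) : ℝ) : EReal) + (Real.logb 2 δ⁻¹ : ℝ) := EReal.coe_add _ _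

def smoothReg (G : ∀ n : ℕ, Matrix (Fin n → ι) (Fin n → ι) ℂ → EReal) (ω : Matrix ι ι ℂ)
    (ε : ℝ) : EReal :=
  limsup (fun n : ℕ => smoothInf (fun ω' => (((n : ℝ)⁻¹ : ℝ) : EReal) * G n ω') (tpow ω n) ε) atTop

lemma smoothReg_antitone (G : ∀ n : ℕ, Matrix (Fin n → ι) (Fin n → ι) ℂ → EReal)
    (ω : Matrix ι ι ℂ) : Antitone (smoothReg G ω) := fun _ _ hε =>
  limsup_le_limsup (.of_forall fun _ => smoothInf_antitone _ _ hε)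

lemma smoothReg_mono {G H : ∀ n : ℕ, Matrix (Fin n → ι) (Fin n → ι) ℂ → EReal}
    (h : ∀ n ω', IsState ω' → G n ω' ≤ H n ω') (ω : Matrix ι ι ℂ) :
    smoothReg G ω ≤ smoothReg H ω := fun _ =>
  limsup_le_limsup (.of_forall fun n => smoothInf_mono (fun ω' hω' =>
    mul_le_mul_of_nonneg_left (h n ω' hω') (by exact_mod_cast inv_nonneg.2 n.cast_nonneg)) _ _)

lemma smoothReg_DOmegasF_le {F : ∀ n : ℕ, Set (Matrix (Fin n → ι) (Fin n → ι) ℂ)}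
    (hF : ∀ n, ∀ σ ∈ F n, IsState σ) {ω : Matrix ι ι ℂ} (hω : IsState ω) {ε δ : ℝ}
    (hδ0 : 0 < δ) (hδ1 : δ ≤ 1) :
    smoothReg (fun n => DOmegasF (F n)) ω (ε + δ) ≤ smoothReg (fun n => logRs (F n)) ω ε := by
  set b := Real.logb 2 δ⁻¹
  have hstep : ∀ᶠ n : ℕ in atTop,
      smoothInf (fun ω' => (((n : ℝ)⁻¹ : ℝ) : EReal) * DOmegasF (F n) ω') (tpow ω n) (ε + δ) ≤
        smoothInf (fun ω' => (((n : ℝ)⁻¹ : ℝ) : EReal) * logRs (F n) ω') (tpow ω n) ε +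
          (((n : ℝ)⁻¹ * b : ℝ) : EReal) := by
    filter_upwards [eventually_ge_atTop 1] with n hn
    have hc : 0 < (n : ℝ)⁻¹ := inv_pos.2 (by exact_mod_cast hn)
    rw [smoothInf_coe_mul hc, smoothInf_coe_mul hc, EReal.coe_mul,
      ← EReal.left_distrib_of_nonneg_of_ne_top (by exact_mod_cast hc.le) (EReal.coe_ne_top _)]
    exact mul_le_mul_of_nonneg_left (smoothInf_DOmegasF_le (hF n) (hω.tpow n) hδ0 hδ1)
      (by exact_mod_cast hc.le)
  have hvanish : Tendsto (fun n : ℕ => (((n : ℝ)⁻¹ * b : ℝ) : EReal)) atTop (𝓝 0) := by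
    rw [← EReal.coe_zero, EReal.tendsto_coe]
    simpa using (tendsto_inv_atTop_zero.comp tendsto_natCast_atTop_atTop).mul_const b
  calc smoothReg (fun n => DOmegasF (F n)) ω (ε + δ)
      ≤ limsup (fun n : ℕ =>
          smoothInf (fun ω' => (((n : ℝ)⁻¹ : ℝ) : EReal) * logRs (F n) ω') (tpow ω n) ε +
            (((n : ℝ)⁻¹ * b : ℝ) : EReal)) atTop := limsup_le_limsup hstep
    _ ≤ smoothReg (fun n => logRs (F n)) ω ε +
          limsup (fun n : ℕ => (((n : ℝ)⁻¹ * b : ℝ) : EReal)) atTop :=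
        EReal.limsup_add_le (.inr (by rw [hvanish.limsup_eq]; simp))
          (.inr (by rw [hvanish.limsup_eq]; simp))
    _ = smoothReg (fun n => logRs (F n)) ω ε := by rw [hvanish.limsup_eq, add_zero]

end Smoothing

lemma _root_.Antitone.tendsto_nhdsGT_of_squeeze {β : Type*}
    [ConditionallyCompleteLinearOrder β] [TopologicalSpace β] [OrderTopology β] {f g : ℝ → β}
    (hf : Antitone f) (hgf : g ≤ f)
    (hfg : ∀ ε, 0 < ε → ε ≤ 1 → f (2 * ε) ≤ g ε) :
    Tendsto g (𝓝[>] 0) (𝓝 (sSup (f '' Set.Ioi 0))) := by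
  have htwice : Tendsto (fun ε : ℝ => 2 * ε) (𝓝[>] 0) (𝓝[>] 0) := by
    refine tendsto_nhdsWithin_iff.2 ⟨?_, eventually_nhdsWithin_of_forall fun ε hε => ?_⟩
    · exact ((continuous_const_mul 2).tendsto' 0 0 (mul_zero 2)).mono_left nhdsWithin_le_nhds
    · exact mul_pos two_pos (Set.mem_Ioi.mp hε)
  refine tendsto_of_tendsto_of_tendsto_of_le_of_le' ((hf.tendsto_nhdsGT 0).comp htwice)
    (hf.tendsto_nhdsGT 0) ?_ (.of_forall hgf)
  filter_upwards [Ioo_mem_nhdsGT zero_lt_one] with ε hε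
  exact hfg ε hε.1 hε.2.le

theorem free_projective_robustness_AEP_general {d : ℕ}
    (F : ∀ n : ℕ, Set (Matrix (Fin n → Fin d) (Fin n → Fin d) ℂ))
    (hF : IsFreeFamily d F)
    (ω : Matrix (Fin d) (Fin d) ℂ) (hω : IsState ω) :
    ∃ L : EReal,
      Tendsto (fun ε : ℝ =>
          limsup (fun n : ℕ =>
            sInf {x : EReal | ∃ ω' : Matrix (Fin n → Fin d) (Fin n → Fin d) ℂ,
              IsState ω' ∧ (1 / 2) * traceNorm (ω' - tpow ω n) ≤ ε ∧
              x = (((n : ℝ)⁻¹ : ℝ) : EReal) * DOmegasF (F n) ω'}) atTop)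
        (nhdsWithin 0 (Set.Ioi 0)) (nhds L) ∧
      Tendsto (fun ε : ℝ =>
          limsup (fun n : ℕ =>
            sInf {x : EReal | ∃ ω' : Matrix (Fin n → Fin d) (Fin n → Fin d) ℂ,
              IsState ω' ∧ (1 / 2) * traceNorm (ω' - tpow ω n) ≤ ε ∧
              x = (((n : ℝ)⁻¹ : ℝ) : EReal) * logRs (F n) ω'}) atTop)
        (nhdsWithin 0 (Set.Ioi 0)) (nhds L) := by
  have hD := smoothReg_antitone (fun n => DOmegasF (F n)) ω
  refine ⟨_, hD.tendsto_nhdsGT 0, hD.tendsto_nhdsGT_of_squeeze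
    (smoothReg_mono (fun n _ => logRs_le_DOmegasF (hF.states n)) ω) fun ε hε hε1 => ?_⟩
  rw [two_mul]
  exact smoothReg_DOmegasF_le hF.states hω hε hε1

/-- **AEP for the free projective robustness.**
In a free-state family satisfying Axioms I–IV with finite standard robustness on all
states, the smoothed regularization of `D_{Ω,s,F}` coincides with the smoothed
regularization of the logarithmic standard robustness `log₂(1 + R_{s,F})`. -/
theorem free_projective_robustness_AEP {d : ℕ}
    (F : ∀ n : ℕ, Set (Matrix (Fin n → Fin d) (Fin n → Fin d) ℂ))
    (hF : IsFreeFamily d F)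
    (hRs : ∀ n, ∀ τ : Matrix (Fin n → Fin d) (Fin n → Fin d) ℂ,
      IsState τ → Rs (F n) τ < ⊤)
    (ω : Matrix (Fin d) (Fin d) ℂ) (hω : IsState ω) :
    ∃ L : EReal,
      Tendsto (fun ε : ℝ =>
          limsup (fun n : ℕ =>
            sInf {x : EReal | ∃ ω' : Matrix (Fin n → Fin d) (Fin n → Fin d) ℂ,
              IsState ω' ∧ (1 / 2) * traceNorm (ω' - tpow ω n) ≤ ε ∧
              x = (((n : ℝ)⁻¹ : ℝ) : EReal) * DOmegasF (F n) ω'}) atTop)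
        (nhdsWithin 0 (Set.Ioi 0)) (nhds L) ∧
      Tendsto (fun ε : ℝ =>
          limsup (fun n : ℕ =>
            sInf {x : EReal | ∃ ω' : Matrix (Fin n → Fin d) (Fin n → Fin d) ℂ,
              IsState ω' ∧ (1 / 2) * traceNorm (ω' - tpow ω n) ≤ ε ∧
              x = (((n : ℝ)⁻¹ : ℝ) : EReal) * logRs (F n) ω'}) atTop)
        (nhdsWithin 0 (Set.Ioi 0)) (nhds L) :=
  free_projective_robustness_AEP_general F hF ω hω

end QRT
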